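/- arXiv:2404.02714 — 4 statements merged into one kernel-verified Lean document; each statement's English description precedes it below -/
import Mathlib

section
/- Let n ≥ k ≥ 3 be positive integers such that (n-2)!/(k!(n-k)!) is an integer. Then Σ_{U ⊆ C([n],k)} ∏_{e ∈ C([n],2)} cos( (2π/(k(k-1))) · mult(e,U) ) = 0 if and only if n ≥ R(k), where the sum is over all subsets U of the set of k-element subsets of [n] and the product is over all 2-element subsets e of [n]. -/
open Finset

/-- The k-th diagonal Ramsey number: the least positive integer `n` such that every
simple graph on `n` vertices contains a clique of size `k` or an independent set of size `k`. -/
noncomputable def diagonalRamsey (k : ℕ) : ℕ :=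
  sInf {n : ℕ | 0 < n ∧ ∀ G : SimpleGraph (Fin n),
    (∃ s : Finset (Fin n), G.IsNClique k s) ∨ (∃ s : Finset (Fin n), Gᶜ.IsNClique k s)}

/-!
Write each cosine as the average of two exponentials and expand the product over pairs `e`.
Exchanging the order of summation turns the sum over families `U` of `k`-sets into a sum over
sets `T` of pairs, i.e. graphs on `[n]`, of a product over `k`-sets `S` of factors
`1 + exp (iθ) = 2 exp (iθ/2) cos (θ/2)`, where `θ/2 = π (e_T(S) - e_{Tᶜ}(S)) / (k (k - 1))` and
`e_T(S)` counts the pairs of `T` inside `S`. Since every pair lies in `C(n-2, k-2)` of the sets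
`S`, the hypothesis `k (k - 1) ∣ C(n-2, k-2)` makes the total phase the same for every `T`, so the
sum is a nonzero multiple of `∑_T ∏_S cos (θ_S/2)`. Each of these cosines has its argument in
`[-π/2, π/2]`, so it is nonnegative and vanishes exactly when `S` is a clique or an independent
set of `T`. Hence the sum vanishes iff every graph on `[n]` has a `k`-clique or an independent
`k`-set, that is, iff `n ≥ R(k)`.
-/

open scoped Real

namespace Complex

theorem prod_cos_eq_sum_powerset {ι : Type*} [DecidableEq ι] (s : Finset ι) (f : ι → ℂ) :
    ∏ i ∈ s, cos (f i) =
      (2 ^ #s)⁻¹ * ∑ t ∈ s.powerset, exp ((∑ i ∈ t, f i - ∑ i ∈ s \ t, f i) * I) := by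
  have hcos : ∀ i ∈ s, cos (f i) = 2⁻¹ * (exp (f i * I) + exp (-f i * I)) := fun i _ => by
    rw [cos]; ring_nf
  rw [prod_congr rfl hcos, prod_mul_distrib, prod_const, inv_pow, prod_add]
  congr 1
  refine sum_congr rfl fun t _ => ?_
  rw [← exp_sum, ← exp_sum, ← exp_add, sub_mul, sum_mul, sum_mul, sub_eq_add_neg, ← sum_neg_distrib]
  simp only [neg_mul]

theorem sum_powerset_exp_sum_mul_I {ι : Type*} (s : Finset ι) (f : ι → ℂ) :
    ∑ t ∈ s.powerset, exp ((∑ i ∈ t, f i) * I) = ∏ i ∈ s, (1 + exp (f i * I)) := by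
  rw [prod_one_add]
  simp only [sum_mul, exp_sum]

theorem one_add_exp_two_mul_mul_I (z : ℂ) : 1 + exp (2 * z * I) = 2 * exp (z * I) * cos z := by
  have h : exp (z * I) * exp (-z * I) = 1 := by rw [← exp_add]; ring_nf; exact exp_zero
  rw [cos, show 2 * z * I = z * I + z * I by ring, exp_add]
  linear_combination -h

theorem sum_powerset_prod_cos_sum_eq {α β : Type*} [DecidableEq α] (E : Finset α)
    (K : Finset β) (a : α → β → ℂ) :
    ∑ U ∈ K.powerset, ∏ e ∈ E, cos (∑ S ∈ U, a e S) =
      2 ^ #K / 2 ^ #E * ∑ T ∈ E.powerset,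
        exp ((∑ S ∈ K, (∑ e ∈ T, a e S - ∑ e ∈ E \ T, a e S) / 2) * I) *
          ∏ S ∈ K, cos ((∑ e ∈ T, a e S - ∑ e ∈ E \ T, a e S) / 2) := by
  set w : Finset α → β → ℂ := fun T S => (∑ e ∈ T, a e S - ∑ e ∈ E \ T, a e S) / 2
  have hw : ∀ T S, ∑ e ∈ T, a e S - ∑ e ∈ E \ T, a e S = 2 * w T S := fun T S => by
    simp only [w]; ring
  calc ∑ U ∈ K.powerset, ∏ e ∈ E, cos (∑ S ∈ U, a e S)
      = (2 ^ #E)⁻¹ * ∑ T ∈ E.powerset, ∑ U ∈ K.powerset,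
          exp ((∑ S ∈ U, (∑ e ∈ T, a e S - ∑ e ∈ E \ T, a e S)) * I) := by
        simp_rw [prod_cos_eq_sum_powerset, ← mul_sum, sum_sub_distrib]
        rw [sum_comm]
        refine congrArg _ (sum_congr rfl fun T _ => sum_congr rfl fun U _ => ?_)
        rw [sum_comm (s := T), sum_comm (s := E \ T)]
    _ = (2 ^ #E)⁻¹ * ∑ T ∈ E.powerset, ∏ S ∈ K, (2 * exp (w T S * I) * cos (w T S)) := by
        simp_rw [sum_powerset_exp_sum_mul_I, hw, one_add_exp_two_mul_mul_I]
    _ = 2 ^ #K / 2 ^ #E * ∑ T ∈ E.powerset,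
          exp ((∑ S ∈ K, w T S) * I) * ∏ S ∈ K, cos (w T S) := by
        simp_rw [prod_mul_distrib, prod_const, ← exp_sum, sum_mul, mul_sum]
        refine sum_congr rfl fun T _ => by ring

theorem sum_powerset_prod_cos_sum_eq_of_sum_eq {α β : Type*} [DecidableEq α]
    (E : Finset α) (K : Finset β) (a : α → β → ℂ) (m : ℤ)
    (ha : ∀ e ∈ E, ∑ S ∈ K, a e S = 2 * π * m) :
    ∑ U ∈ K.powerset, ∏ e ∈ E, cos (∑ S ∈ U, a e S) =
      2 ^ #K / 2 ^ #E * exp (-(π * m * #E) * I) * ∑ T ∈ E.powerset,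
        ∏ S ∈ K, cos ((∑ e ∈ T, a e S - ∑ e ∈ E \ T, a e S) / 2) := by
  rw [sum_powerset_prod_cos_sum_eq, mul_assoc]
  congr 1
  rw [mul_sum]
  refine sum_congr rfl fun T hT => ?_
  congr 1
  have hTE := mem_powerset.1 hT
  have hcard := card_sdiff_add_card_eq_card hTE
  have hphase : (∑ S ∈ K, (∑ e ∈ T, a e S - ∑ e ∈ E \ T, a e S) / 2) * I =
      -(π * m * #E) * I + (m * #T : ℤ) * (2 * π * I) := by
    rw [← sum_div, sum_sub_distrib, sum_comm (s := K), sum_comm (s := K),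
      sum_congr rfl fun e he => ha e (hTE he), sum_congr rfl fun e he => ha e (sdiff_subset he),
      sum_const, sum_const, nsmul_eq_mul, nsmul_eq_mul, ← hcard]
    push_cast
    ring
  rw [hphase, exp_add, exp_int_mul_two_pi_mul_I, mul_one]

end Complex

namespace Real

variable {c x y : ℝ}

theorem cos_half_mul_sub_nonneg (hx : 0 ≤ x) (hy : 0 ≤ y) (h : c * (x + y) = π) :
    0 ≤ cos (c / 2 * (x - y)) := by
  have hc : 0 < c := by by_contra! hc; nlinarith [pi_pos]
  apply cos_nonneg_of_mem_Icc
  constructor <;> nlinarith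

theorem cos_half_mul_sub_eq_zero_iff (hx : 0 ≤ x) (hy : 0 ≤ y) (h : c * (x + y) = π) :
    cos (c / 2 * (x - y)) = 0 ↔ x = 0 ∨ y = 0 := by
  have hc : 0 < c := by by_contra! hc; nlinarith [pi_pos]
  constructor
  · intro hcos
    by_contra! hxy
    have : 0 < cos (c / 2 * (x - y)) := by
      apply cos_pos_of_mem_Ioo
      constructor <;> nlinarith [hx.lt_of_ne' hxy.1, hy.lt_of_ne' hxy.2]
    exact this.ne' hcos
  · rintro (rfl | rfl)
    · rw [show c / 2 * (0 - y) = -(π / 2) by linarith, cos_neg, cos_pi_div_two]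
    · rw [show c / 2 * (x - 0) = π / 2 by linarith, cos_pi_div_two]

end Real

theorem Finset.card_filter_add_card_filter_sdiff {α : Type*} [DecidableEq α] {E T : Finset α}
    (hT : T ⊆ E) (p : α → Prop) [DecidablePred p] :
    #{e ∈ T | p e} + #{e ∈ E \ T | p e} = #{e ∈ E | p e} := by
  rw [← card_union_of_disjoint (disjoint_filter_filter disjoint_sdiff), ← filter_union,
    union_sdiff_of_subset hT]

open Complex in
theorem sum_powerset_prod_cos_mul_card_filter_eq_zero_iff {α β : Type*} [DecidableEq α]
    (E : Finset α) (K : Finset β) (r : α → β → Prop) [∀ e S, Decidable (r e S)] (c : ℝ) (m : ℤ)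
    (hc : ∀ e ∈ E, c * #{S ∈ K | r e S} = 2 * π * m) :
    ∑ U ∈ K.powerset, ∏ e ∈ E, Real.cos (c * #{S ∈ U | r e S}) = 0 ↔
      ∑ T ∈ E.powerset, ∏ S ∈ K,
        Real.cos (c / 2 * (#{e ∈ T | r e S} - #{e ∈ E \ T | r e S})) = 0 := by
  set a : α → β → ℂ := fun e S => c * if r e S then 1 else 0
  have hU : ∀ e (U : Finset β), ∑ S ∈ U, a e S = ((c * #{S ∈ U | r e S} : ℝ) : ℂ) := by
    intro e U; simp only [a, ← mul_sum, sum_boole]; push_cast; rfl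
  have hT : ∀ (T : Finset α) S, (∑ e ∈ T, a e S - ∑ e ∈ E \ T, a e S) / 2 =
      ((c / 2 * (#{e ∈ T | r e S} - #{e ∈ E \ T | r e S}) : ℝ) : ℂ) := by
    intro T S; simp only [a, ← mul_sum, sum_boole]; push_cast; ring
  have key := sum_powerset_prod_cos_sum_eq_of_sum_eq E K a m fun e he => by
    rw [hU, hc e he]; push_cast; ring
  simp_rw [hU, hT, ← ofReal_cos, ← ofReal_prod, ← ofReal_sum] at key
  rw [← ofReal_eq_zero, key, mul_eq_zero, or_iff_right (by simp [exp_ne_zero]), ofReal_eq_zero]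

theorem sum_powerset_prod_cos_half_mul_sub_eq_zero_iff {α β : Type*} [DecidableEq α]
    (E : Finset α) (K : Finset β) (r : α → β → Prop) [∀ e S, Decidable (r e S)] (c : ℝ)
    (hc : ∀ S ∈ K, c * #{e ∈ E | r e S} = π) :
    ∑ T ∈ E.powerset, ∏ S ∈ K,
        Real.cos (c / 2 * (#{e ∈ T | r e S} - #{e ∈ E \ T | r e S})) = 0 ↔
      ∀ T ∈ E.powerset, ∃ S ∈ K, #{e ∈ T | r e S} = 0 ∨ #{e ∈ E \ T | r e S} = 0 := by
  have hcT : ∀ T ∈ E.powerset, ∀ S ∈ K,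
      c * ((#{e ∈ T | r e S} : ℝ) + #{e ∈ E \ T | r e S}) = π := fun T hT S hS => by
    rw [← hc S hS, ← card_filter_add_card_filter_sdiff (mem_powerset.1 hT)]
    push_cast; rfl
  rw [sum_eq_zero_iff_of_nonneg fun T hT => prod_nonneg fun S hS =>
    Real.cos_half_mul_sub_nonneg (Nat.cast_nonneg _) (Nat.cast_nonneg _) (hcT T hT S hS)]
  refine forall₂_congr fun T hT => ?_
  rw [prod_eq_zero_iff]
  refine exists_congr fun S => and_congr_right fun hS => ?_
  rw [Real.cos_half_mul_sub_eq_zero_iff (Nat.cast_nonneg _) (Nat.cast_nonneg _) (hcT T hT S hS)]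
  norm_cast

namespace SimpleGraph

variable {V : Type*} (G : SimpleGraph V)

theorem exists_isNClique_or_compl_of_choose_le (a b : ℕ) (A : Finset V)
    (hA : (a + b).choose a ≤ #A) :
    (∃ s ⊆ A, G.IsNClique a s) ∨ ∃ s ⊆ A, Gᶜ.IsNClique b s := by
  classical
  induction a generalizing b A with
  | zero => exact Or.inl ⟨∅, empty_subset _, by simp⟩
  | succ a iha =>
    induction b generalizing A with
    | zero => exact Or.inr ⟨∅, empty_subset _, by simp⟩
    | succ b ihb =>
      obtain ⟨v, hv⟩ : A.Nonempty := card_pos.1 (hA.trans_lt' (Nat.choose_pos (by omega)))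
      set N := (A.erase v).filter (G.Adj v)
      set M := (A.erase v).filter (fun u => ¬G.Adj v u)
      have hNM : #N + #M + 1 = #A := by
        rw [card_filter_add_card_filter_not, card_erase_add_one hv]
      have hpascal : (a + 1 + (b + 1)).choose (a + 1) =
          (a + (b + 1)).choose a + (a + 1 + b).choose (a + 1) := by
        rw [show a + 1 + (b + 1) = (a + 1 + b) + 1 by omega, Nat.choose_succ_succ',
          show a + 1 + b = a + (b + 1) by omega]
      have hNsub : N ⊆ A := (filter_subset _ _).trans (erase_subset _ _)
      have hMsub : M ⊆ A := (filter_subset _ _).trans (erase_subset _ _)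
      by_cases hN : (a + (b + 1)).choose a ≤ #N
      · rcases iha (b + 1) N hN with ⟨s, hsN, hs⟩ | ⟨s, hsN, hs⟩
        · refine Or.inl ⟨insert v s, insert_subset hv (hsN.trans hNsub), hs.insert ?_⟩
          exact fun u hu => (mem_filter.1 (hsN hu)).2
        · exact Or.inr ⟨s, hsN.trans hNsub, hs⟩
      · rcases ihb M (by omega) with ⟨s, hsM, hs⟩ | ⟨s, hsM, hs⟩
        · exact Or.inl ⟨s, hsM.trans hMsub, hs⟩
        · refine Or.inr ⟨insert v s, insert_subset hv (hsM.trans hMsub), hs.insert ?_⟩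
          intro u hu
          obtain ⟨hu, hnadj⟩ := mem_filter.1 (hsM hu)
          exact (compl_adj G v u).2 ⟨(ne_of_mem_erase hu).symm, hnadj⟩

end SimpleGraph

theorem Finset.forall_pair_subset_iff {V : Type*} [Fintype V] [DecidableEq V] {S : Finset V}
    {P : Finset V → Prop} :
    (∀ e ∈ powersetCard 2 (univ : Finset V), e ⊆ S → P e) ↔
      ∀ x ∈ S, ∀ y ∈ S, x ≠ y → P {x, y} := by
  constructor
  · intro h x hx y hy hxy
    exact h _ (mem_powersetCard_univ.2 (card_pair hxy))
      (insert_subset hx (singleton_subset_iff.2 hy))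
  · intro h e he heS
    obtain ⟨x, y, hxy, rfl⟩ := card_eq_two.1 (mem_powersetCard_univ.1 he)
    exact h x (heS (mem_insert_self _ _)) y (heS (mem_insert_of_mem (mem_singleton_self _))) hxy

namespace SimpleGraph

variable {V : Type*} [DecidableEq V]

theorem fromRel_adj_pair_mem (T : Finset (Finset V)) {x y : V} :
    (fromRel fun x y => {x, y} ∈ T).Adj x y ↔ x ≠ y ∧ {x, y} ∈ T := by
  rw [fromRel_adj, pair_comm y x, or_self]

variable [Fintype V]

theorem isClique_fromRel_iff (T : Finset (Finset V)) (S : Finset V) :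
    (fromRel fun x y => {x, y} ∈ T).IsClique (S : Set V) ↔
      #{e ∈ powersetCard 2 univ \ T | e ⊆ S} = 0 := by
  rw [card_eq_zero, filter_eq_empty_iff]
  simp only [mem_sdiff, and_imp, not_imp_not]
  rw [forall_pair_subset_iff]
  simp only [IsClique, Set.Pairwise, mem_coe, fromRel_adj_pair_mem]
  exact forall₂_congr fun x _ => forall₂_congr fun y _ => imp_congr_right and_iff_right

theorem isClique_compl_fromRel_iff {T : Finset (Finset V)} (hT : T ⊆ powersetCard 2 univ)
    (S : Finset V) :
    (fromRel fun x y => {x, y} ∈ T)ᶜ.IsClique (S : Set V) ↔ #{e ∈ T | e ⊆ S} = 0 := by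
  rw [card_eq_zero, filter_eq_empty_iff,
    show (∀ e ∈ T, ¬e ⊆ S) ↔ ∀ e ∈ powersetCard 2 univ, e ⊆ S → e ∉ T from
      ⟨fun h e _ heS heT => h e heT heS, fun h e heT => (h e (hT heT) · heT)⟩,
    forall_pair_subset_iff]
  simp only [IsClique, Set.Pairwise, mem_coe, compl_adj, fromRel_adj_pair_mem]
  exact forall₂_congr fun x _ => forall₂_congr fun y _ => imp_congr_right fun hxy => by
    simp [hxy]

theorem exists_fromRel_pair_mem_eq (G : SimpleGraph V) :
    ∃ T ⊆ powersetCard 2 univ, (fromRel fun x y => {x, y} ∈ T) = G := by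
  classical
  refine ⟨{e ∈ powersetCard 2 (univ : Finset V) | ∀ x ∈ e, ∀ y ∈ e, x ≠ y → G.Adj x y},
    filter_subset _ _, ?_⟩
  ext x y
  rw [fromRel_adj_pair_mem, mem_filter, mem_powersetCard_univ]
  constructor
  · rintro ⟨hxy, -, h⟩
    exact h x (mem_insert_self _ _) y (mem_insert_of_mem (mem_singleton_self _)) hxy
  · intro h
    refine ⟨G.ne_of_adj h, card_pair (G.ne_of_adj h), ?_⟩
    simp only [mem_insert, mem_singleton]
    rintro u (rfl | rfl) v (rfl | rfl) huv
    exacts [absurd rfl huv, h, h.symm, absurd rfl huv]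

end SimpleGraph

def ForcesCliqueOrIndep (V : Type*) (k : ℕ) : Prop :=
  ∀ G : SimpleGraph V, (∃ s, G.IsNClique k s) ∨ ∃ s, Gᶜ.IsNClique k s

theorem ForcesCliqueOrIndep.of_embedding {V W : Type*} {k : ℕ} (f : V ↪ W)
    (h : ForcesCliqueOrIndep V k) : ForcesCliqueOrIndep W k := by
  classical
  intro G
  have hcompl : (G.comap f)ᶜ = Gᶜ.comap f := by
    ext; simp [f.injective.ne_iff]
  rcases h (G.comap f) with ⟨s, hs⟩ | ⟨s, hs⟩
  · exact Or.inl ⟨s.map f, hs.map.mono (SimpleGraph.map_comap_le f G)⟩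
  · rw [hcompl] at hs
    exact Or.inr ⟨s.map f, hs.map.mono (SimpleGraph.map_comap_le f Gᶜ)⟩

theorem forcesCliqueOrIndep_of_choose_le {V : Type*} [Fintype V] {k : ℕ}
    (h : (k + k).choose k ≤ Fintype.card V) : ForcesCliqueOrIndep V k := fun G => by
  rcases G.exists_isNClique_or_compl_of_choose_le k k univ h with ⟨s, -, hs⟩ | ⟨s, -, hs⟩
  exacts [Or.inl ⟨s, hs⟩, Or.inr ⟨s, hs⟩]

theorem diagonalRamsey_le_iff {k n : ℕ} (hk : 0 < k) :
    diagonalRamsey k ≤ n ↔ ForcesCliqueOrIndep (Fin n) k := by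
  constructor
  · intro h
    have hmem := Nat.sInf_mem (s := {n | 0 < n ∧ ForcesCliqueOrIndep (Fin n) k})
      ⟨(k + k).choose k, Nat.choose_pos (by omega), forcesCliqueOrIndep_of_choose_le (by simp)⟩
    exact hmem.2.of_embedding (Fin.castLEEmb h)
  · intro H
    refine Nat.sInf_le ⟨?_, H⟩
    obtain ⟨s, hs⟩ | ⟨s, hs⟩ := H ⊥ <;>
      exact hk.trans_le (hs.card_eq ▸ card_le_univ s |>.trans_eq (Fintype.card_fin n))

theorem forall_exists_card_filter_eq_zero_iff_forcesCliqueOrIndep {V : Type*} [Fintype V]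
    [DecidableEq V] (k : ℕ) :
    (∀ T ∈ (powersetCard 2 (univ : Finset V)).powerset, ∃ S ∈ powersetCard k univ,
      #{e ∈ T | e ⊆ S} = 0 ∨ #{e ∈ powersetCard 2 univ \ T | e ⊆ S} = 0) ↔
      ForcesCliqueOrIndep V k := by
  constructor
  · intro H G
    obtain ⟨T, hT, rfl⟩ := G.exists_fromRel_pair_mem_eq
    obtain ⟨S, hS, hindep | hclique⟩ := H T (mem_powerset.2 hT)
    · exact Or.inr ⟨S, (SimpleGraph.isClique_compl_fromRel_iff hT S).2 hindep,
        mem_powersetCard_univ.1 hS⟩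
    · exact Or.inl ⟨S, (SimpleGraph.isClique_fromRel_iff T S).2 hclique,
        mem_powersetCard_univ.1 hS⟩
  · intro H T hT
    obtain ⟨S, hS⟩ | ⟨S, hS⟩ := H (SimpleGraph.fromRel fun x y => {x, y} ∈ T)
    · exact ⟨S, mem_powersetCard_univ.2 hS.card_eq,
        Or.inr ((SimpleGraph.isClique_fromRel_iff T S).1 hS.isClique)⟩
    · exact ⟨S, mem_powersetCard_univ.2 hS.card_eq,
        Or.inl ((SimpleGraph.isClique_compl_fromRel_iff (mem_powerset.1 hT) S).1 hS.isClique)⟩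

theorem Nat.mul_pred_dvd_choose_sub_two {n k : ℕ} (hk : 2 ≤ k) (hkn : k ≤ n)
    (h : k.factorial * (n - k).factorial ∣ (n - 2).factorial) :
    k * (k - 1) ∣ (n - 2).choose (k - 2) := by
  have hn : (n - 2).factorial =
      (n - 2).choose (k - 2) * ((k - 2).factorial * (n - k).factorial) := by
    rw [← Nat.choose_mul_factorial_mul_factorial (by omega : k - 2 ≤ n - 2),
      show n - 2 - (k - 2) = n - k by omega, mul_assoc]
  have hk : k.factorial = k * (k - 1) * (k - 2).factorial := by
    rw [← Nat.mul_factorial_pred (by omega), ← Nat.mul_factorial_pred (by omega : k - 1 ≠ 0),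
      show k - 1 - 1 = k - 2 by omega, mul_assoc]
  rw [hn, hk, mul_assoc] at h
  exact Nat.dvd_of_mul_dvd_mul_right (by positivity) h

theorem Finset.card_filter_powersetCard_univ_subset {V : Type*} [Fintype V] [DecidableEq V]
    (r : ℕ) (S : Finset V) : #{e ∈ powersetCard r (univ : Finset V) | e ⊆ S} = (#S).choose r := by
  rw [← card_powersetCard]
  congr 1
  ext e
  simp [mem_powersetCard, and_comm]

theorem stmt_0 (n k : ℕ) (hk : 3 ≤ k) (hkn : k ≤ n)
    (hdiv : (Nat.factorial k * Nat.factorial (n - k)) ∣ Nat.factorial (n - 2)) :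
    (∑ U ∈ (Finset.powersetCard k (Finset.univ : Finset (Fin n))).powerset,
        ∏ e ∈ Finset.powersetCard 2 (Finset.univ : Finset (Fin n)),
          Real.cos (2 * Real.pi / ((k : ℝ) * ((k : ℝ) - 1)) *
            ((U.filter fun S => e ⊆ S).card : ℝ))) = 0 ↔
      diagonalRamsey k ≤ n := by
  obtain ⟨m, hm⟩ := Nat.mul_pred_dvd_choose_sub_two (by omega) hkn hdiv
  have hk1 : (k : ℝ) - 1 ≠ 0 := sub_ne_zero.2 (by exact_mod_cast (by omega : k ≠ 1))
  have hphase : ∀ e ∈ powersetCard 2 (univ : Finset (Fin n)),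
      2 * π / (k * (k - 1)) * #{S ∈ powersetCard k univ | e ⊆ S} = 2 * π * m := by
    intro e he
    rw [card_filter_powersetCard_subset e univ k (subset_univ e)
      ((mem_powersetCard_univ.1 he).trans_le (by omega)), card_univ, Fintype.card_fin,
      mem_powersetCard_univ.1 he, hm]
    push_cast [Nat.cast_sub (by omega : 1 ≤ k)]
    field_simp
  have hclique : ∀ S ∈ powersetCard k (univ : Finset (Fin n)),
      2 * π / (k * (k - 1)) * #{e ∈ powersetCard 2 univ | e ⊆ S} = π := by
    intro S hS
    rw [card_filter_powersetCard_univ_subset, mem_powersetCard_univ.1 hS, Nat.cast_choose_two]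
    field_simp
  rw [sum_powerset_prod_cos_mul_card_filter_eq_zero_iff _ _ _ _ _ hphase,
    sum_powerset_prod_cos_half_mul_sub_eq_zero_iff _ _ _ _ hclique,
    forall_exists_card_filter_eq_zero_iff_forcesCliqueOrIndep, diagonalRamsey_le_iff (by omega)]
end

section
/- Let n ≥ k ≥ 3 be positive integers such that (n-2)!/(k!(n-k)!) is an integer. Then Σ_{G,H} (-1)^{|E(H)|} cos( (4π/(k(k-1))) · i(G,H) ) = 0 if and only if n ≥ R(k), where the summation is over all simple graphs G on the vertex set [n] and all k-uniform hypergraphs H on the vertex set [n]. -/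
open Finset

/-!
Fix a graph `W` on `[n]`; for a `k`-set `v` let `e v` be the number of edges of `W` inside `v`
and `φ v = π e v / C(k,2)`. Since `i(W, U) = ∑_{v ∈ U} e v`, the sum over hypergraphs `U` is
`Re ∏_v (1 - e^{2iφ_v}) = Re ((-2i)^N e^{i ∑_v φ_v}) ∏_v sin φ_v` with `N = C(n,k)`.
The divisibility hypothesis says `2 C(k,2) ∣ C(n-2,k-2)`; by double counting
`∑_v φ_v = π |W| C(n-2,k-2) / C(k,2) ∈ 2πℤ`, and `C(n,k) C(k,2) = C(n,2) C(n-2,k-2)`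
makes `N` even. So the inner sum is `(-4)^(N/2) ∏_v sin φ_v`. As `0 ≤ e v ≤ C(k,2)`, every
factor is nonnegative and vanishes iff `v` is a clique or an independent set of `W`. The total
therefore vanishes iff every graph on `[n]` has a clique or an independent set of size `k`,
i.e. iff `R(k) ≤ n`.
-/

section Trigonometry

open Complex

lemma one_sub_exp_two_mul_mul_I (x : ℂ) :
    1 - exp (2 * x * I) = -2 * I * sin x * exp (x * I) := by
  have h : exp (-x * I) * exp (x * I) = 1 := by rw [← exp_add]; simp
  rw [sin, show 2 * x * I = x * I + x * I by ring, exp_add]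
  linear_combination I ^ 2 * h + (1 - exp (x * I) ^ 2) * I_sq

lemma sum_powerset_neg_one_pow_mul_cos {ι : Type*} (s : Finset ι) (φ : ι → ℝ) :
    ∑ U ∈ s.powerset, (-1 : ℝ) ^ #U * Real.cos (2 * ∑ v ∈ U, φ v) =
      ((-2 * I) ^ #s * exp ((∑ v ∈ s, φ v : ℝ) * I)).re * ∏ v ∈ s, Real.sin (φ v) := by
  have hterm (U : Finset ι) : (-1 : ℝ) ^ #U * Real.cos (2 * ∑ v ∈ U, φ v) =
      (∏ v ∈ U, -exp ((2 * φ v : ℝ) * I)).re := by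
    rw [prod_neg, ← exp_sum, ← sum_mul, ← ofReal_sum, ← Finset.mul_sum,
      show (-1 : ℂ) ^ #U = ((-1 : ℝ) ^ #U : ℝ) by push_cast; rfl, re_ofReal_mul,
      exp_ofReal_mul_I_re]
  simp_rw [hterm, ← re_sum, ← prod_one_add, ← sub_eq_add_neg, ofReal_mul, ofReal_ofNat,
    one_sub_exp_two_mul_mul_I, prod_mul_distrib, prod_const, ← exp_sum, ← sum_mul,
    ← ofReal_sin, ← ofReal_prod, ← ofReal_sum]
  rw [mul_right_comm, re_mul_ofReal, mul_pow]

lemma sum_powerset_neg_one_pow_mul_cos_of_card_eq {ι : Type*} {s : Finset ι} {φ : ι → ℝ}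
    {M : ℕ} {m : ℤ} (hs : #s = 2 * M) (hφ : ∑ v ∈ s, φ v = m * (2 * Real.pi)) :
    ∑ U ∈ s.powerset, (-1 : ℝ) ^ #U * Real.cos (2 * ∑ v ∈ U, φ v) =
      (-4) ^ M * ∏ v ∈ s, Real.sin (φ v) := by
  have hexp : exp ((∑ v ∈ s, φ v : ℝ) * I) = 1 := by
    rw [hφ, ← exp_int_mul_two_pi_mul_I m]
    push_cast
    ring_nf
  rw [sum_powerset_neg_one_pow_mul_cos, hexp, hs, pow_mul, mul_one,
    show (-2 * I) ^ 2 = ((-4 : ℝ) : ℂ) by push_cast; linear_combination 4 * I_sq,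
    ← ofReal_pow, ofReal_re]

end Trigonometry

namespace Real

lemma sin_pi_mul_div_nonneg {a b : ℕ} (hab : a ≤ b) :
    0 ≤ sin (π * a / b) := by
  apply sin_nonneg_of_nonneg_of_le_pi (by positivity)
  exact div_le_of_le_mul₀ (by positivity) pi_pos.le
    (mul_le_mul_of_nonneg_left (by exact_mod_cast hab) pi_pos.le)

lemma sin_pi_mul_div_eq_zero_iff {a b : ℕ} (hab : a ≤ b) :
    sin (π * a / b) = 0 ↔ a = 0 ∨ a = b := by
  rcases hab.lt_or_eq with hlt | rfl
  · have hb : (0 : ℝ) < b := by exact_mod_cast (Nat.zero_le a).trans_lt hlt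
    have hlt' : π * a / b < π := by
      rw [div_lt_iff₀ hb]
      exact mul_lt_mul_of_pos_left (by exact_mod_cast hlt) pi_pos
    rw [sin_eq_zero_iff_of_lt_of_lt (by linarith [pi_pos, (by positivity : 0 ≤ π * a / b)]) hlt']
    simp [hlt.ne, pi_ne_zero, hb.ne']
  · rcases Nat.eq_zero_or_pos a with rfl | ha
    · simp
    · rw [mul_div_assoc, div_self (by positivity), mul_one, sin_pi]
      simp

end Real

namespace Nat

lemma two_mul_choose_two_dvd_choose_sub_two {n k : ℕ} (hk : 2 ≤ k) (hkn : k ≤ n)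
    (h : k ! * (n - k)! ∣ (n - 2)!) : 2 * k.choose 2 ∣ (n - 2).choose (k - 2) := by
  rw [← choose_mul_factorial_mul_factorial hk, ← choose_mul_factorial_mul_factorial
    (Nat.sub_le_sub_right hkn 2), show n - 2 - (k - 2) = n - k by omega] at h
  refine Nat.dvd_of_mul_dvd_mul_right (k := (k - 2)! * (n - k)!) (by positivity) ?_
  simpa [mul_comm, mul_assoc, mul_left_comm] using h

lemma choose_eq_two_mul_of_choose_sub_two {n k t : ℕ} (hk : 2 ≤ k)
    (ht : (n - 2).choose (k - 2) = 2 * k.choose 2 * t) :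
    n.choose k = 2 * (n.choose 2 * t) := by
  have h := choose_mul (n := n) hk
  rw [ht] at h
  refine Nat.eq_of_mul_eq_mul_right (choose_pos hk) ?_
  rw [h]; ring

end Nat

namespace Finset

variable {V : Type*} [DecidableEq V]

lemma card_filter_product_subset (W U : Finset (Finset V)) :
    #((W ×ˢ U).filter fun p => p.1 ⊆ p.2) = ∑ v ∈ U, #(W.filter (· ⊆ v)) := by
  simp_rw [card_filter, sum_product]
  exact sum_comm

lemma filter_subset_eq_inter_powersetCard {W : Finset (Finset V)} {r : ℕ}
    (hW : (W : Set (Finset V)).Sized r) (v : Finset V) :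
    W.filter (· ⊆ v) = W ∩ v.powersetCard r := by
  ext w
  simp only [mem_filter, mem_inter, mem_powersetCard]
  exact ⟨fun h => ⟨h.1, h.2, hW h.1⟩, fun h => ⟨h.1, h.2.1⟩⟩

lemma card_filter_subset_le_choose {W : Finset (Finset V)} {r : ℕ}
    (hW : (W : Set (Finset V)).Sized r) (v : Finset V) :
    #(W.filter (· ⊆ v)) ≤ (#v).choose r := by
  rw [filter_subset_eq_inter_powersetCard hW, ← card_powersetCard]
  exact card_le_card inter_subset_right

lemma forall_mem_powersetCard_two {v : Finset V} {P : Finset V → Prop} :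
    (∀ w ∈ v.powersetCard 2, P w) ↔ ∀ a ∈ v, ∀ b ∈ v, a ≠ b → P {a, b} := by
  constructor
  · intro h a ha b hb hab
    exact h _ (mem_powersetCard.2 ⟨insert_subset ha (singleton_subset_iff.2 hb), card_pair hab⟩)
  · intro h w hw
    obtain ⟨hwv, hw2⟩ := mem_powersetCard.1 hw
    obtain ⟨a, b, hab, rfl⟩ := card_eq_two.1 hw2
    exact h a (hwv (mem_insert_self a _)) b (hwv (mem_insert_of_mem (mem_singleton_self b))) hab

variable [Fintype V]

lemma sum_card_filter_subset_powersetCard {W : Finset (Finset V)} {r k : ℕ}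
    (hW : (W : Set (Finset V)).Sized r) (hrk : r ≤ k) :
    ∑ v ∈ powersetCard k univ, #(W.filter (· ⊆ v)) =
      #W * (Fintype.card V - r).choose (k - r) := by
  simp_rw [card_filter]
  rw [sum_comm, ← smul_eq_mul, ← sum_const]
  refine sum_congr rfl fun w hw => ?_
  rw [← card_filter, card_filter_powersetCard_subset w univ k (subset_univ w) (hW hw ▸ hrk),
    card_univ, hW hw]

end Finset

namespace SimpleGraph

lemma exists_isNClique_or_compl_of_comap {V W : Type*} {G : SimpleGraph W} (f : V ↪ W) {k : ℕ}
    (h : (∃ s, (G.comap f).IsNClique k s) ∨ ∃ s, (G.comap f)ᶜ.IsNClique k s) :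
    (∃ s, G.IsNClique k s) ∨ ∃ s, Gᶜ.IsNClique k s := by
  contrapose! h
  exact ⟨CliqueFree.comap ⟨(Embedding.comap f G).toCopy⟩ h.1,
    CliqueFree.comap ⟨(Embedding.complEquiv (Embedding.comap f G)).toCopy⟩ h.2⟩

variable {V : Type*} [DecidableEq V]

lemma IsNClique.insert_of_subset_filter_adj {G : SimpleGraph V} [DecidableRel G.Adj]
    {C A : Finset V} {v : V} {s : ℕ} (hv : v ∈ C) (hAC : A ⊆ C.filter (G.Adj v))
    (hA : G.IsNClique s A) : insert v A ⊆ C ∧ G.IsNClique (s + 1) (insert v A) :=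
  ⟨insert_subset hv (hAC.trans (filter_subset _ _)),
    hA.insert fun _ hb => (mem_filter.1 (hAC hb)).2⟩

theorem exists_isNClique_or_compl_of_choose_le_s1 (G : SimpleGraph V) [DecidableRel G.Adj] :
    ∀ (s t : ℕ) (C : Finset V), (s + t).choose s ≤ #C →
      (∃ A ⊆ C, G.IsNClique s A) ∨ ∃ A ⊆ C, Gᶜ.IsNClique t A
  | 0, _, _, _ => Or.inl ⟨∅, empty_subset _, by simp⟩
  | _ + 1, 0, _, _ => Or.inr ⟨∅, empty_subset _, by simp⟩
  | s + 1, t + 1, C, hC => by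
    obtain ⟨v, hv⟩ : C.Nonempty := card_pos.1 (lt_of_lt_of_le (Nat.choose_pos (by omega)) hC)
    have hcover : C ⊆ insert v (C.filter (G.Adj v) ∪ C.filter (Gᶜ.Adj v)) := by
      intro u hu
      by_cases huv : v = u
      · exact huv ▸ mem_insert_self _ _
      · by_cases hadj : G.Adj v u <;> simp [hu, hadj, huv]
    have hcard : #C ≤ #(C.filter (G.Adj v)) + #(C.filter (Gᶜ.Adj v)) + 1 :=
      (card_le_card hcover).trans ((card_insert_le _ _).trans (by grw [card_union_le]))
    have hsplit : (s + 1 + (t + 1)).choose (s + 1) =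
        (s + (t + 1)).choose s + (s + 1 + t).choose (s + 1) := by
      rw [show s + 1 + (t + 1) = s + (t + 1) + 1 by omega, Nat.choose_succ_succ']
      congr 2
      omega
    by_cases hN : (s + (t + 1)).choose s ≤ #(C.filter (G.Adj v))
    · rcases exists_isNClique_or_compl_of_choose_le_s1 G s (t + 1) _ hN with
        ⟨A, hAC, hA⟩ | ⟨A, hAC, hA⟩
      · exact Or.inl ⟨_, IsNClique.insert_of_subset_filter_adj hv hAC hA⟩
      · exact Or.inr ⟨A, hAC.trans (filter_subset _ _), hA⟩
    · have hM : (s + 1 + t).choose (s + 1) ≤ #(C.filter (Gᶜ.Adj v)) := by omega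
      rcases exists_isNClique_or_compl_of_choose_le_s1 G (s + 1) t _ hM with
        ⟨A, hAC, hA⟩ | ⟨A, hAC, hA⟩
      · exact Or.inl ⟨A, hAC.trans (filter_subset _ _), hA⟩
      · exact Or.inr ⟨_, IsNClique.insert_of_subset_filter_adj hv hAC hA⟩

def fromPairs (W : Finset (Finset V)) : SimpleGraph V :=
  fromRel fun a b => {a, b} ∈ W

lemma fromPairs_adj {W : Finset (Finset V)} {a b : V} :
    (fromPairs W).Adj a b ↔ a ≠ b ∧ {a, b} ∈ W := by
  simp [fromPairs, pair_comm b a]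

lemma isClique_fromPairs_iff {W : Finset (Finset V)} {v : Finset V} :
    (fromPairs W).IsClique (v : Set V) ↔ v.powersetCard 2 ⊆ W := by
  rw [subset_iff, forall_mem_powersetCard_two (P := (· ∈ W)), IsClique, Set.Pairwise]
  simp only [mem_coe, fromPairs_adj]
  constructor
  · intro h a ha b hb hab
    exact (h ha hb hab).2
  · intro h a ha b hb hab
    exact ⟨hab, h a ha b hb hab⟩

lemma isClique_compl_fromPairs_iff {W : Finset (Finset V)} {v : Finset V} :
    (fromPairs W)ᶜ.IsClique (v : Set V) ↔ Disjoint W (v.powersetCard 2) := by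
  rw [disjoint_right, forall_mem_powersetCard_two (P := (· ∉ W)), IsClique, Set.Pairwise]
  simp only [mem_coe, compl_adj, fromPairs_adj]
  constructor
  · intro h a ha b hb hab hmem
    exact (h ha hb hab).2 ⟨hab, hmem⟩
  · intro h a ha b hb hab
    exact ⟨hab, fun hadj => h a ha b hb hab hadj.2⟩

lemma exists_fromPairs_eq [Fintype V] (G : SimpleGraph V) :
    ∃ W ⊆ powersetCard 2 univ, fromPairs W = G := by
  classical
  refine ⟨(powersetCard 2 univ).filter fun w => ∀ a ∈ w, ∀ b ∈ w, a ≠ b → G.Adj a b,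
    filter_subset _ _, ?_⟩
  ext a b
  rw [fromPairs_adj, mem_filter, mem_powersetCard]
  constructor
  · rintro ⟨hab, -, h⟩
    exact h a (mem_insert_self a _) b (mem_insert_of_mem (mem_singleton_self b)) hab
  · intro hadj
    refine ⟨hadj.ne, ⟨subset_univ _, card_pair hadj.ne⟩, ?_⟩
    simp only [mem_insert, mem_singleton]
    rintro x (rfl | rfl) y (rfl | rfl) hxy
    all_goals first | exact absurd rfl hxy | exact hadj | exact hadj.symm

variable {W : Finset (Finset V)} {v : Finset V} {k : ℕ}

lemma isNClique_fromPairs_iff (hW : (W : Set (Finset V)).Sized 2) (hv : #v = k) :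
    (fromPairs W).IsNClique k v ↔ #(W.filter (· ⊆ v)) = k.choose 2 := by
  rw [isNClique_iff, and_iff_left hv, isClique_fromPairs_iff,
    filter_subset_eq_inter_powersetCard hW, ← inter_eq_right, ← hv, ← card_powersetCard]
  exact ⟨fun h => by rw [h], fun h => eq_of_subset_of_card_le inter_subset_right h.ge⟩

lemma isNClique_compl_fromPairs_iff (hW : (W : Set (Finset V)).Sized 2) (hv : #v = k) :
    (fromPairs W)ᶜ.IsNClique k v ↔ #(W.filter (· ⊆ v)) = 0 := by
  rw [isNClique_iff, isClique_compl_fromPairs_iff, filter_subset_eq_inter_powersetCard hW,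
    card_eq_zero, ← disjoint_iff_inter_eq_empty]
  exact and_iff_left hv

lemma forall_exists_isNClique_iff [Fintype V] :
    (∀ G : SimpleGraph V, (∃ s, G.IsNClique k s) ∨ ∃ s, Gᶜ.IsNClique k s) ↔
      ∀ W ∈ (powersetCard 2 (univ : Finset V)).powerset, ∃ v ∈ powersetCard k univ,
        #(W.filter (· ⊆ v)) = 0 ∨ #(W.filter (· ⊆ v)) = k.choose 2 := by
  simp only [mem_powerset, subset_powersetCard_univ_iff]
  constructor
  · intro h W hW
    rcases h (fromPairs W) with ⟨v, hv⟩ | ⟨v, hv⟩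
    · exact ⟨v, mem_powersetCard_univ.2 hv.2,
        Or.inr ((isNClique_fromPairs_iff hW hv.2).1 hv)⟩
    · exact ⟨v, mem_powersetCard_univ.2 hv.2,
        Or.inl ((isNClique_compl_fromPairs_iff hW hv.2).1 hv)⟩
  · intro h G
    obtain ⟨W, hW, rfl⟩ := exists_fromPairs_eq G
    rw [subset_powersetCard_univ_iff] at hW
    obtain ⟨v, hv, hvW⟩ := h W hW
    rw [mem_powersetCard_univ] at hv
    rcases hvW with hempty | hfull
    · exact Or.inr ⟨v, (isNClique_compl_fromPairs_iff hW hv).2 hempty⟩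
    · exact Or.inl ⟨v, (isNClique_fromPairs_iff hW hv).2 hfull⟩

end SimpleGraph

lemma diagonalRamsey_le_iff_s1 {k n : ℕ} (hn : 0 < n) :
    diagonalRamsey k ≤ n ↔ ∀ G : SimpleGraph (Fin n),
      (∃ s, G.IsNClique k s) ∨ ∃ s, Gᶜ.IsNClique k s := by
  refine ⟨fun hle G => ?_, fun h => Nat.sInf_le ⟨hn, h⟩⟩
  have hmem : diagonalRamsey k ∈ {n : ℕ | 0 < n ∧ ∀ G : SimpleGraph (Fin n),
      (∃ s, G.IsNClique k s) ∨ ∃ s, Gᶜ.IsNClique k s} := by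
    refine Nat.sInf_mem ⟨(k + k).choose k, Nat.choose_pos (by omega), fun G => ?_⟩
    classical
    simpa using G.exists_isNClique_or_compl_of_choose_le_s1 k k univ (by simp)
  exact SimpleGraph.exists_isNClique_or_compl_of_comap (Fin.castLEEmb hle) (hmem.2 _)

open Real in
lemma sum_neg_one_pow_mul_cos_incidence {V : Type*} [DecidableEq V] [Fintype V]
    {W : Finset (Finset V)} {k M t : ℕ} (hW : (W : Set (Finset V)).Sized 2) (hk : 2 ≤ k)
    (ht : (Fintype.card V - 2).choose (k - 2) = 2 * k.choose 2 * t)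
    (hM : (Fintype.card V).choose k = 2 * M) :
    ∑ U ∈ (powersetCard k (univ : Finset V)).powerset, (-1 : ℝ) ^ #U *
        cos (4 * π / ((k : ℝ) * ((k : ℝ) - 1)) * #((W ×ˢ U).filter fun p => p.1 ⊆ p.2)) =
      (-4) ^ M * ∏ v ∈ powersetCard k univ, sin (π * #(W.filter (· ⊆ v)) / k.choose 2) := by
  have hk2 : (k.choose 2 : ℝ) ≠ 0 := by exact_mod_cast (Nat.choose_pos hk).ne'
  have hangle (U : Finset (Finset V)) :
      4 * π / ((k : ℝ) * ((k : ℝ) - 1)) * #((W ×ˢ U).filter fun p => p.1 ⊆ p.2) =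
        2 * ∑ v ∈ U, π * #(W.filter (· ⊆ v)) / k.choose 2 := by
    rw [card_filter_product_subset, ← sum_div, ← mul_sum, Nat.cast_sum]
    rw [Nat.cast_choose_two] at hk2 ⊢
    field_simp
    ring
  simp_rw [hangle]
  refine sum_powerset_neg_one_pow_mul_cos_of_card_eq (m := #W * t) ?_ ?_
  · rw [card_powersetCard, card_univ, hM]
  · rw [← sum_div, ← mul_sum, ← Nat.cast_sum, sum_card_filter_subset_powersetCard hW hk, ht]
    push_cast
    field_simp

/-- Here a simple graph on `[n]` is identified with its edge set `W`, a set of 2-element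
subsets of `[n]`, and a `k`-uniform hypergraph on `[n]` is identified with its edge set `U`,
a set of `k`-element subsets of `[n]`.  The incidence number `i(G,H)` is the number of pairs
`(u,v) ∈ E(G) × E(H)` with `u ⊆ v`. -/
theorem stmt_1 (n k : ℕ) (hk : 3 ≤ k) (hkn : k ≤ n)
    (hdiv : (Nat.factorial k * Nat.factorial (n - k)) ∣ Nat.factorial (n - 2)) :
    (∑ W ∈ (Finset.powersetCard 2 (Finset.univ : Finset (Fin n))).powerset,
      ∑ U ∈ (Finset.powersetCard k (Finset.univ : Finset (Fin n))).powerset,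
        (-1 : ℝ) ^ U.card *
          Real.cos (4 * Real.pi / ((k : ℝ) * ((k : ℝ) - 1)) *
            (((W ×ˢ U).filter fun p => p.1 ⊆ p.2).card : ℝ))) = 0 ↔
      diagonalRamsey k ≤ n := by
  obtain ⟨t, ht⟩ := Nat.two_mul_choose_two_dvd_choose_sub_two (by omega) hkn hdiv
  have hM := Nat.choose_eq_two_mul_of_choose_sub_two (by omega) ht
  rw [← Fintype.card_fin n] at ht hM
  have hsized {W : Finset (Finset (Fin n))} (hW : W ∈ (powersetCard 2 univ).powerset) :
      (W : Set (Finset (Fin n))).Sized 2 := subset_powersetCard_univ_iff.1 (mem_powerset.1 hW)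
  have hbound {W : Finset (Finset (Fin n))} (hW : W ∈ (powersetCard 2 univ).powerset)
      {v : Finset (Fin n)} (hv : v ∈ powersetCard k univ) :
      #(W.filter (· ⊆ v)) ≤ k.choose 2 :=
    mem_powersetCard_univ.1 hv ▸ card_filter_subset_le_choose (hsized hW) v
  rw [sum_congr rfl fun W hW =>
      sum_neg_one_pow_mul_cos_incidence (hsized hW) (by omega) ht hM,
    ← mul_sum, mul_eq_zero, or_iff_right (pow_ne_zero _ (by norm_num)),
    sum_eq_zero_iff_of_nonneg fun W hW =>
      prod_nonneg fun v hv => Real.sin_pi_mul_div_nonneg (hbound hW hv),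
    diagonalRamsey_le_iff_s1 (by omega), SimpleGraph.forall_exists_isNClique_iff]
  refine forall₂_congr fun W hW => ?_
  rw [prod_eq_zero_iff]
  exact exists_congr fun v => and_congr_right fun hv =>
    Real.sin_pi_mul_div_eq_zero_iff (hbound hW hv)
end

section
/- For all positive integers n ≥ k ≥ 2, every real number q, and every integer m, the following identity holds: 2^{C(n,2)} · Σ_{U ⊆ C([n],k)} (-1)^{(m+1)|U|} ∏_{e ∈ C([n],2)} cos( (2π/(k(k-1))) ( q·C(n-2,k-2) + m·mult(e,U) ) ) = Σ_{G,H} (-1)^{|E(H)|} cos( (π q (n-2)!/(k!(n-k)!)) · (4|E(G)| − n(n−1)) + (4πm/(k(k−1))) · i(G,H) ), where on the right the summation is over all simple graphs G on [n] and all k-uniform hypergraphs H on [n]. -/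
open Finset

/-- Product-to-sum expansion for products of cosines. -/
lemma prod_cos_expand {ι : Type*} [DecidableEq ι] (s : Finset ι) (f : ι → ℝ) :
    (2 : ℝ) ^ s.card * ∏ e ∈ s, Real.cos (f e) =
      ∑ W ∈ s.powerset, Real.cos (2 * ∑ e ∈ W, f e - ∑ e ∈ s, f e) := by
  induction s using Finset.induction_on with
  | empty => simp
  | @insert a s ha ih =>
    rw [Finset.sum_powerset_insert ha]
    rw [Finset.prod_insert ha, Finset.card_insert_of_notMem ha, pow_succ]
    have : (2:ℝ) ^ s.card * 2 * (Real.cos (f a) * ∏ e ∈ s, Real.cos (f e))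
        = (2 * Real.cos (f a)) * ((2:ℝ) ^ s.card * ∏ e ∈ s, Real.cos (f e)) := by ring
    rw [this, ih, Finset.mul_sum, ← Finset.sum_add_distrib]
    refine Finset.sum_congr rfl fun W hW => ?_
    have haW : a ∉ W := fun h => ha (Finset.mem_powerset.mp hW h)
    rw [Finset.sum_insert haW, Finset.sum_insert ha]
    have h2 : ∀ A B : ℝ, 2 * Real.cos A * Real.cos B =
        Real.cos (B - A) + Real.cos (B + A) := by
      intro A B
      rw [Real.cos_sub, Real.cos_add]; ring
    have := h2 (f a) (2 * ∑ e ∈ W, f e - ∑ e ∈ s, f e)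
    rw [this]
    congr 1 <;> congr 1 <;> ring

lemma count_pairs {α : Type*} [DecidableEq α] (W U : Finset (Finset α)) :
    ∑ e ∈ W, (U.filter fun S => e ⊆ S).card =
      ((W ×ˢ U).filter fun p => p.1 ⊆ p.2).card := by
  rw [Finset.card_filter, Finset.sum_product]
  exact Finset.sum_congr rfl fun e _ => Finset.card_filter (fun S => e ⊆ S) U

lemma count_all {n k : ℕ} (U : Finset (Finset (Fin n)))
    (hU : U ⊆ Finset.powersetCard k (Finset.univ : Finset (Fin n))) :
    ∑ e ∈ Finset.powersetCard 2 (Finset.univ : Finset (Fin n)),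
      (U.filter fun S => e ⊆ S).card = U.card * k.choose 2 := by
  have h1 : ∀ e : Finset (Fin n), (U.filter fun S => e ⊆ S).card
      = ∑ S ∈ U, if e ⊆ S then 1 else 0 := fun e => Finset.card_filter _ _
  simp only [h1]
  rw [Finset.sum_comm]
  have hper : ∀ S ∈ U,
      (∑ e ∈ Finset.powersetCard 2 (Finset.univ : Finset (Fin n)),
        if e ⊆ S then 1 else 0) = k.choose 2 := by
    intro S hS
    have hSk : S.card = k := (Finset.mem_powersetCard.mp (hU hS)).2
    rw [← Finset.card_filter]
    have heq : (Finset.powersetCard 2 (Finset.univ : Finset (Fin n))).filter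
        (fun e => e ⊆ S) = Finset.powersetCard 2 S := by
      ext e
      simp only [Finset.mem_filter, Finset.mem_powersetCard, Finset.subset_univ,
        true_and]
      tauto
    rw [heq, Finset.card_powersetCard, hSk]
  rw [Finset.sum_congr rfl hper, Finset.sum_const, smul_eq_mul]

lemma neg_one_sign (m : ℤ) (c : ℕ) :
    ((-1:ℝ)) ^ ((m+1)*(c:ℤ)) * ((-1:ℝ)) ^ (m*(c:ℤ)) = (-1:ℝ) ^ c := by
  rw [← zpow_add₀ (by norm_num : (-1:ℝ) ≠ 0)]
  have h : (m+1)*(c:ℤ) + m*(c:ℤ) = (2*m+1)*(c:ℤ) := by ring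
  rw [h, zpow_mul]
  have h2 : ((-1:ℝ)) ^ (2*m+1) = -1 := by
    rw [zpow_add₀ (by norm_num : (-1:ℝ) ≠ 0), zpow_mul]
    norm_num
  rw [h2, zpow_natCast]

/-- Identity between the two trigonometric summations: graphs on `[n]` are identified with
their edge sets `W ⊆ C([n],2)`, `k`-uniform hypergraphs with their edge sets `U ⊆ C([n],k)`;
`mult(e,U)` is the number of `S ∈ U` containing `e`, and the incidence number `i(G,H)` is the
number of pairs `(u,v) ∈ E(G) × E(H)` with `u ⊆ v`. -/
theorem stmt_6 (n k : ℕ) (hk : 2 ≤ k) (hkn : k ≤ n) (q : ℝ) (m : ℤ) :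
    (2 : ℝ) ^ (n.choose 2) *
      ∑ U ∈ (Finset.powersetCard k (Finset.univ : Finset (Fin n))).powerset,
        (-1 : ℝ) ^ ((m + 1) * (U.card : ℤ)) *
          ∏ e ∈ Finset.powersetCard 2 (Finset.univ : Finset (Fin n)),
            Real.cos (2 * Real.pi / ((k : ℝ) * ((k : ℝ) - 1)) *
              (q * ((n - 2).choose (k - 2) : ℝ) +
                (m : ℝ) * ((U.filter fun S => e ⊆ S).card : ℝ))) =
    ∑ W ∈ (Finset.powersetCard 2 (Finset.univ : Finset (Fin n))).powerset,
      ∑ U ∈ (Finset.powersetCard k (Finset.univ : Finset (Fin n))).powerset,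
        (-1 : ℝ) ^ U.card *
          Real.cos
            (Real.pi * q * ((n - 2).factorial : ℝ) /
                ((k.factorial : ℝ) * ((n - k).factorial : ℝ)) *
              (4 * (W.card : ℝ) - (n : ℝ) * ((n : ℝ) - 1)) +
              4 * Real.pi * (m : ℝ) / ((k : ℝ) * ((k : ℝ) - 1)) *
                (((W ×ˢ U).filter fun p => p.1 ⊆ p.2).card : ℝ)) := by
  have hE2card : (Finset.powersetCard 2 (Finset.univ : Finset (Fin n))).card
      = n.choose 2 := by
    rw [Finset.card_powersetCard, Finset.card_univ, Fintype.card_fin]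
  -- key real facts
  have hkR : (2:ℝ) ≤ (k:ℝ) := by exact_mod_cast hk
  have hKK : (k:ℝ) * ((k:ℝ) - 1) = 2 * (k.choose 2 : ℝ) := by
    have h : k.choose 2 * 2 = k * (k - 1) := by
      rw [Nat.choose_two_right]
      apply Nat.div_mul_cancel
      rcases Nat.even_or_odd k with h | h
      · exact (h.mul_right _).two_dvd
      · exact ((Nat.Odd.sub_odd h odd_one).mul_left _).two_dvd
    have := congrArg (Nat.cast : ℕ → ℝ) h
    push_cast [Nat.cast_sub (show 1 ≤ k by omega)] at this
    linarith
  have hNN : (n:ℝ) * ((n:ℝ) - 1) = 2 * (n.choose 2 : ℝ) := by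
    have h : n.choose 2 * 2 = n * (n - 1) := by
      rw [Nat.choose_two_right]
      apply Nat.div_mul_cancel
      rcases Nat.even_or_odd n with h | h
      · exact (h.mul_right _).two_dvd
      · exact ((Nat.Odd.sub_odd h odd_one).mul_left _).two_dvd
    have := congrArg (Nat.cast : ℕ → ℝ) h
    push_cast [Nat.cast_sub (show 1 ≤ n by omega)] at this
    linarith
  have hFk : (k.factorial : ℝ) = (k:ℝ) * ((k:ℝ) - 1) * ((k-2).factorial : ℝ) := by
    obtain ⟨j, rfl⟩ : ∃ j, k = j + 2 := ⟨k - 2, by omega⟩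
    simp only [Nat.add_sub_cancel]
    rw [show j + 2 = (j+1) + 1 from rfl, Nat.factorial_succ, Nat.factorial_succ]
    push_cast
    ring
  have hCh : ((n-2).choose (k-2) : ℝ) * ((k-2).factorial : ℝ) * ((n-k).factorial : ℝ)
      = ((n-2).factorial : ℝ) := by
    have h := Nat.choose_mul_factorial_mul_factorial
      (show k - 2 ≤ n - 2 from Nat.sub_le_sub_right hkn 2)
    rw [show n - 2 - (k - 2) = n - k by omega] at h
    exact_mod_cast congrArg (Nat.cast : ℕ → ℝ) h
  have hK2pos : (0:ℝ) < (k.choose 2 : ℝ) := by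
    exact_mod_cast Nat.choose_pos hk
  have hK2ne : (k.choose 2 : ℝ) ≠ 0 := ne_of_gt hK2pos
  have hFkm2 : ((k-2).factorial : ℝ) ≠ 0 := by positivity
  have hFnk : ((n-k).factorial : ℝ) ≠ 0 := by positivity
  rw [Finset.mul_sum, Finset.sum_comm]
  refine Finset.sum_congr rfl fun U hUmem => ?_
  have hU : U ⊆ Finset.powersetCard k (Finset.univ : Finset (Fin n)) :=
    Finset.mem_powerset.mp hUmem
  rw [mul_left_comm, ← hE2card,
    prod_cos_expand (Finset.powersetCard 2 (Finset.univ : Finset (Fin n)))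
      (fun e => 2 * Real.pi / ((k : ℝ) * ((k : ℝ) - 1)) *
        (q * ((n - 2).choose (k - 2) : ℝ) +
          (m : ℝ) * ((U.filter fun S => e ⊆ S).card : ℝ))),
    Finset.mul_sum]
  refine Finset.sum_congr rfl fun W hWmem => ?_
  -- compute the two sums of f
  set g : Finset (Fin n) → ℝ := fun e => ((U.filter fun S => e ⊆ S).card : ℝ) with hg
  have hsplit : ∀ (V : Finset (Finset (Fin n))),
      ∑ e ∈ V, 2 * Real.pi / ((k : ℝ) * ((k : ℝ) - 1)) *
          (q * ((n - 2).choose (k - 2) : ℝ) + (m : ℝ) * g e)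
        = (V.card : ℝ) * (2 * Real.pi / ((k : ℝ) * ((k : ℝ) - 1)) *
            (q * ((n - 2).choose (k - 2) : ℝ)))
          + 2 * Real.pi / ((k : ℝ) * ((k : ℝ) - 1)) * (m : ℝ) * ∑ e ∈ V, g e := by
    intro V
    rw [Finset.sum_congr rfl (fun e _ => show
        2 * Real.pi / ((k : ℝ) * ((k : ℝ) - 1)) *
          (q * ((n - 2).choose (k - 2) : ℝ) + (m : ℝ) * g e)
        = 2 * Real.pi / ((k : ℝ) * ((k : ℝ) - 1)) * (q * ((n - 2).choose (k - 2) : ℝ))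
          + 2 * Real.pi / ((k : ℝ) * ((k : ℝ) - 1)) * (m : ℝ) * g e by ring),
      Finset.sum_add_distrib, Finset.sum_const, ← Finset.mul_sum, nsmul_eq_mul]
  have hgW : ∑ e ∈ W, g e = (((W ×ˢ U).filter fun p => p.1 ⊆ p.2).card : ℝ) := by
    rw [hg, ← Nat.cast_sum]
    exact_mod_cast congrArg (Nat.cast : ℕ → ℝ) (count_pairs W U)
  have hgE2 : ∑ e ∈ Finset.powersetCard 2 (Finset.univ : Finset (Fin n)), g e
      = (U.card : ℝ) * (k.choose 2 : ℝ) := by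
    rw [hg, ← Nat.cast_sum]
    exact_mod_cast congrArg (Nat.cast : ℕ → ℝ) (count_all U hU)
  have harg :
      2 * (∑ e ∈ W, 2 * Real.pi / ((k : ℝ) * ((k : ℝ) - 1)) *
            (q * ((n - 2).choose (k - 2) : ℝ) + (m : ℝ) * g e))
        - ∑ e ∈ Finset.powersetCard 2 (Finset.univ : Finset (Fin n)),
            2 * Real.pi / ((k : ℝ) * ((k : ℝ) - 1)) *
              (q * ((n - 2).choose (k - 2) : ℝ) + (m : ℝ) * g e)
      = (Real.pi * q * ((n - 2).factorial : ℝ) /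
            ((k.factorial : ℝ) * ((n - k).factorial : ℝ)) *
          (4 * (W.card : ℝ) - (n : ℝ) * ((n : ℝ) - 1)) +
          4 * Real.pi * (m : ℝ) / ((k : ℝ) * ((k : ℝ) - 1)) *
            (((W ×ˢ U).filter fun p => p.1 ⊆ p.2).card : ℝ))
        - ((m * (U.card : ℤ) : ℤ) : ℝ) * Real.pi := by
    rw [hsplit W, hsplit _, hgW, hgE2, hE2card, hFk, ← hCh, hKK, hNN]
    push_cast
    field_simp
    ring
  rw [harg, Real.cos_sub_int_mul_pi, ← mul_assoc, neg_one_sign]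
end

section
/- Let n ≥ k ≥ 2 be positive integers with k congruent to 2 or 3 modulo 4. Then the probability that a uniformly random graph G on the vertex set [n] (each of the C(n,2) possible edges present independently with probability 1/2) is a k-Ramsey graph equals (-1)^{C(n,k)} · P_{n,k}(1/2). Equivalently, the number of k-Ramsey graphs on [n] equals (-1)^{C(n,k)} · 2^{C(n,2)} · P_{n,k}(1/2). -/
open Finset

/-- A graph is `k`-Ramsey if it has no clique of size `k` and no independent set of size `k`. -/
def IsRamseyGraph (k : ℕ) {V : Type*} (G : SimpleGraph V) : Prop :=
  (¬ ∃ s : Finset V, G.IsNClique k s) ∧ (¬ ∃ s : Finset V, Gᶜ.IsNClique k s)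

/-- The set of `k`-element subsets of `[n]`. -/
def ksubsets (n k : ℕ) : Finset (Finset (Fin n)) :=
  Finset.powersetCard k (Finset.univ : Finset (Fin n))

/-- The set `A` of assignments `g` associating to each `k`-element subset `S` of `[n]`
a graph on the vertex set `S` (given by its edge set, a set of `2`-element subsets of `S`)
which is neither complete nor empty.  An assignment is encoded as a function on all
finsets of `Fin n`, required to be `∅` off the `k`-element subsets. -/
def RamseyA (n k : ℕ) : Finset (Finset (Fin n) → Finset (Finset (Fin n))) :=
  Finset.univ.filter fun g =>
    (∀ S ∈ ksubsets n k,
      g S ⊆ Finset.powersetCard 2 S ∧ g S ≠ ∅ ∧ g S ≠ Finset.powersetCard 2 S) ∧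
    (∀ S, S ∉ ksubsets n k → g S = ∅)

/-- `Edges(g)`, the union of the edge sets of the graphs `g_S`. -/
def gEdges (n k : ℕ) (g : Finset (Fin n) → Finset (Finset (Fin n))) :
    Finset (Finset (Fin n)) :=
  (ksubsets n k).biUnion g

/-- The polynomial `P_{n,k}(t) = Σ_{g ∈ A} sign(g) t^{|Edges(g)|}`. -/
noncomputable def Pnk (n k : ℕ) : Polynomial ℤ :=
  ∑ g ∈ RamseyA n k,
    Polynomial.C (∏ S ∈ ksubsets n k, (-1 : ℤ) ^ (g S).card) *
      Polynomial.X ^ (gEdges n k g).card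

/-! Write `N = C(n, 2)`. Since `(1/2)^|Edges g| = 2^(-N) · #{E ⊆ ([n] choose 2) | Edges g ⊆ E}`,
exchanging the sums gives `2^N P_{n,k}(1/2) = ∑_E ∑_{g ∈ A, Edges g ⊆ E} sign g`.
For fixed `E` the inner sum factorizes over the `k`-subsets `S` into sums of `(-1)^|h|` over the
nonempty, non-complete `h ⊆ E ∩ (S choose 2)`. The alternating sum over all subsets of
`E ∩ (S choose 2)` vanishes unless it is empty, and `|S choose 2| = C(k, 2)` is odd for
`k ≡ 2, 3 (mod 4)`, so the factor is `-1` when `E` restricted to `S` is neither empty nor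
complete and `0` otherwise. Hence the outer sum counts the edge sets of `k`-Ramsey graphs,
each with sign `(-1)^C(n, k)`. -/

open Finset

theorem odd_choose_two_of_mod_four {k : ℕ} (hk : k % 4 = 2 ∨ k % 4 = 3) : Odd (k.choose 2) := by
  obtain ⟨m, rfl | rfl⟩ : ∃ m, k = 4 * m + 2 ∨ k = 4 * m + 3 := ⟨k / 4, by omega⟩
  · rw [Nat.choose_two_right,
      show (4 * m + 2) * (4 * m + 2 - 1) = 2 * ((2 * m + 1) * (4 * m + 1)) by
        rw [show 4 * m + 2 - 1 = 4 * m + 1 by omega]; ring,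
      Nat.mul_div_cancel_left _ two_pos]
    exact Odd.mul ⟨m, rfl⟩ ⟨2 * m, by ring⟩
  · rw [Nat.choose_two_right,
      show (4 * m + 3) * (4 * m + 3 - 1) = 2 * ((4 * m + 3) * (2 * m + 1)) by
        rw [show 4 * m + 3 - 1 = 4 * m + 2 by omega]; ring,
      Nat.mul_div_cancel_left _ two_pos]
    exact Odd.mul ⟨2 * m + 1, by ring⟩ ⟨m, rfl⟩

theorem sum_powerset_filter_ne_empty_ne_neg_one_pow_card {α : Type*} [DecidableEq α]
    {F P : Finset α} (hFP : F ⊆ P) (hP : Odd #P) :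
    ∑ h ∈ F.powerset with h ≠ ∅ ∧ h ≠ P, (-1 : ℤ) ^ #h = if F ≠ ∅ ∧ F ≠ P then -1 else 0 := by
  have hfilter : {h ∈ F.powerset | h ≠ ∅ ∧ h ≠ P} = (F.powerset.erase ∅).erase P := by
    ext h; simp only [mem_filter, mem_erase]; tauto
  have hP0 : P ≠ ∅ := by rintro rfl; simp at hP
  rw [hfilter]
  by_cases hF : F = P
  · subst hF
    rw [sum_erase_eq_sub (by simpa using hP0), sum_erase_eq_sub (empty_mem_powerset _),
      sum_powerset_neg_one_pow_card, hP.neg_one_pow]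
    simp [hP0]
  · have hPF : P ∉ F.powerset.erase ∅ := fun h =>
      hF (hFP.antisymm (mem_powerset.mp (mem_of_mem_erase h)))
    rw [erase_eq_of_notMem hPF, sum_erase_eq_sub (empty_mem_powerset _),
      sum_powerset_neg_one_pow_card]
    by_cases hF0 : F = ∅ <;> simp [hF0, hF]

theorem Finset.pair_mem_powersetCard_two {α : Type*} [DecidableEq α] {s : Finset α} {a b : α}
    (hab : a ≠ b) : {a, b} ∈ powersetCard 2 s ↔ a ∈ s ∧ b ∈ s := by
  simp [mem_powersetCard, card_pair hab, insert_subset_iff]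

namespace SimpleGraph
variable {V : Type*} [Fintype V] [DecidableEq V] {G : SimpleGraph V} [DecidableRel G.Adj]

-- `G.cliqueFinset 2` is the edge set of `G` written as 2-element subsets, as in `RamseyA`.

theorem pair_mem_cliqueFinset_two {a b : V} : {a, b} ∈ G.cliqueFinset 2 ↔ G.Adj a b := by
  rcases eq_or_ne a b with rfl | hab
  · simp
  · simp [mem_cliqueFinset_iff, isNClique_iff, card_pair hab, hab]

theorem mem_cliqueFinset_two {e : Finset V} :
    e ∈ G.cliqueFinset 2 ↔ ∃ a b, G.Adj a b ∧ e = {a, b} := by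
  constructor
  · intro he
    obtain ⟨a, b, -, rfl⟩ := card_eq_two.mp (mem_cliqueFinset_iff.mp he).card_eq
    exact ⟨a, b, pair_mem_cliqueFinset_two.mp he, rfl⟩
  · rintro ⟨a, b, hab, rfl⟩
    exact pair_mem_cliqueFinset_two.mpr hab

theorem cliqueFinset_subset_powersetCard (r : ℕ) : G.cliqueFinset r ⊆ powersetCard r univ :=
  fun e he => mem_powersetCard.mpr ⟨subset_univ e, (mem_cliqueFinset_iff.mp he).card_eq⟩

theorem isClique_iff_powersetCard_two_subset {s : Finset V} :
    G.IsClique (s : Set V) ↔ powersetCard 2 s ⊆ G.cliqueFinset 2 := by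
  constructor
  · intro hs e he
    obtain ⟨hes, he2⟩ := mem_powersetCard.mp he
    exact mem_cliqueFinset_iff.mpr ⟨hs.subset (by simpa using hes), he2⟩
  · intro h a ha b hb hab
    exact pair_mem_cliqueFinset_two.mp (h ((pair_mem_powersetCard_two hab).mpr ⟨ha, hb⟩))

theorem isIndepSet_iff_disjoint_powersetCard_two {s : Finset V} :
    G.IsIndepSet (s : Set V) ↔ Disjoint (G.cliqueFinset 2) (powersetCard 2 s) := by
  constructor
  · intro hs
    refine Finset.disjoint_left.mpr fun e he hes => ?_
    obtain ⟨a, b, hab, rfl⟩ := mem_cliqueFinset_two.mp he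
    rw [pair_mem_powersetCard_two hab.ne] at hes
    exact hs hes.1 hes.2 hab.ne hab
  · intro h a ha b hb hab hadj
    exact Finset.disjoint_left.mp h (pair_mem_cliqueFinset_two.mpr hadj)
      ((pair_mem_powersetCard_two hab).mpr ⟨ha, hb⟩)

theorem cliqueFinset_two_fromRel {E : Finset (Finset V)} (hE : E ⊆ powersetCard 2 univ)
    [DecidableRel (fromRel fun a b : V => {a, b} ∈ E).Adj] :
    (fromRel fun a b => {a, b} ∈ E).cliqueFinset 2 = E := by
  ext e
  constructor
  · intro he
    obtain ⟨a, b, ⟨-, hab | hba⟩, rfl⟩ := mem_cliqueFinset_two.mp he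
    · exact hab
    · rwa [pair_comm]
  · intro he
    obtain ⟨a, b, hab, rfl⟩ := card_eq_two.mp (mem_powersetCard.mp (hE he)).2
    exact pair_mem_cliqueFinset_two.mpr ⟨hab, Or.inl he⟩

theorem card_filter_cliqueFinset_two [∀ G : SimpleGraph V, DecidableRel G.Adj]
    (p : Finset (Finset V) → Prop) [DecidablePred p] :
    #{G : SimpleGraph V | p (G.cliqueFinset 2)} = #{E ∈ (powersetCard 2 univ).powerset | p E} := by
  refine card_bij (fun G _ => G.cliqueFinset 2) (fun G hG => ?_) (fun G _ H _ hGH => ?_)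
    fun E hE => ?_
  · exact mem_filter.mpr
      ⟨mem_powerset.mpr (cliqueFinset_subset_powersetCard 2), (mem_filter.mp hG).2⟩
  · ext a b
    rw [← pair_mem_cliqueFinset_two, hGH, pair_mem_cliqueFinset_two]
  · obtain ⟨hE, hpE⟩ := mem_filter.mp hE
    have hG := cliqueFinset_two_fromRel (mem_powerset.mp hE)
    exact ⟨fromRel fun a b => {a, b} ∈ E, mem_filter.mpr ⟨mem_univ _, by rwa [hG]⟩, hG⟩

end SimpleGraph

@[simp] theorem mem_ksubsets {n k : ℕ} {S : Finset (Fin n)} : S ∈ ksubsets n k ↔ #S = k := by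
  simp [ksubsets]

theorem card_ksubsets (n k : ℕ) : #(ksubsets n k) = n.choose k := by
  simp [ksubsets]

def assignmentSign (n k : ℕ) (g : Finset (Fin n) → Finset (Finset (Fin n))) : ℤ :=
  ∏ S ∈ ksubsets n k, (-1) ^ #(g S)

def IsRamseyEdgeSet (n k : ℕ) (E : Finset (Finset (Fin n))) : Prop :=
  ∀ S ∈ ksubsets n k, E ∩ powersetCard 2 S ≠ ∅ ∧ E ∩ powersetCard 2 S ≠ powersetCard 2 S

instance (n k : ℕ) : DecidablePred (IsRamseyEdgeSet n k) :=
  fun _ => decidableDforallFinset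

section Factorization
variable (n k : ℕ) (E : Finset (Finset (Fin n)))

def admissibleGraphs (S : Finset (Fin n)) : Finset (Finset (Finset (Fin n))) :=
  if S ∈ ksubsets n k then {h ∈ (E ∩ powersetCard 2 S).powerset | h ≠ ∅ ∧ h ≠ powersetCard 2 S}
  else {∅}

theorem filter_gEdges_subset_eq_piFinset :
    {g ∈ RamseyA n k | gEdges n k g ⊆ E} = Fintype.piFinset (admissibleGraphs n k E) := by
  ext g
  simp only [RamseyA, gEdges, mem_filter, mem_univ, true_and, Fintype.mem_piFinset,
    admissibleGraphs, biUnion_subset]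
  constructor
  · rintro ⟨⟨hA, hA'⟩, hE⟩ S
    split_ifs with hS
    · obtain ⟨hsub, hne, hne'⟩ := hA S hS
      exact mem_filter.mpr ⟨mem_powerset.mpr (subset_inter (hE S hS) hsub), hne, hne'⟩
    · exact mem_singleton.mpr (hA' S hS)
  · intro h
    refine ⟨⟨fun S hS => ?_, fun S hS => ?_⟩, fun S hS => ?_⟩ <;> have hgS := h S
    · rw [if_pos hS, mem_filter, mem_powerset, subset_inter_iff] at hgS
      exact ⟨hgS.1.2, hgS.2⟩
    · rwa [if_neg hS, mem_singleton] at hgS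
    · rw [if_pos hS, mem_filter, mem_powerset, subset_inter_iff] at hgS
      exact hgS.1.1

theorem sum_assignmentSign_filter_gEdges_subset :
    ∑ g ∈ RamseyA n k with gEdges n k g ⊆ E, assignmentSign n k g =
      ∏ S ∈ ksubsets n k, ∑ h ∈ (E ∩ powersetCard 2 S).powerset with h ≠ ∅ ∧ h ≠ powersetCard 2 S,
        (-1) ^ #h := by
  have hsign : ∀ g ∈ Fintype.piFinset (admissibleGraphs n k E),
      assignmentSign n k g = ∏ S, (-1) ^ #(g S) := by
    intro g hg
    refine prod_subset (subset_univ _) fun S _ hS => ?_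
    have hgS := Fintype.mem_piFinset.mp hg S
    rw [admissibleGraphs, if_neg hS, mem_singleton] at hgS
    simp [hgS]
  rw [filter_gEdges_subset_eq_piFinset, sum_congr rfl hsign,
    ← prod_univ_sum (admissibleGraphs n k E) fun _ h => (-1 : ℤ) ^ #h]
  refine (prod_subset (subset_univ _) fun S _ hS => ?_).symm.trans (prod_congr rfl fun S hS => ?_)
  · rw [admissibleGraphs, if_neg hS, sum_singleton, card_empty, pow_zero]
  · rw [admissibleGraphs, if_pos hS]

end Factorization

theorem gEdges_subset_powersetCard {n k : ℕ} {g : Finset (Fin n) → Finset (Finset (Fin n))}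
    (hg : g ∈ RamseyA n k) : gEdges n k g ⊆ powersetCard 2 univ :=
  biUnion_subset.mpr fun S hS =>
    ((mem_filter.mp hg).2.1 S hS).1.trans (powersetCard_mono (subset_univ S))

theorem sum_assignmentSign_filter_gEdges_subset_eq_ite {n k : ℕ} (hk : Odd (k.choose 2))
    (E : Finset (Finset (Fin n))) :
    ∑ g ∈ RamseyA n k with gEdges n k g ⊆ E, assignmentSign n k g =
      if IsRamseyEdgeSet n k E then (-1) ^ n.choose k else 0 := by
  have hfactor : ∀ S ∈ ksubsets n k,
      ∑ h ∈ (E ∩ powersetCard 2 S).powerset with h ≠ ∅ ∧ h ≠ powersetCard 2 S, (-1 : ℤ) ^ #h =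
        if E ∩ powersetCard 2 S ≠ ∅ ∧ E ∩ powersetCard 2 S ≠ powersetCard 2 S then -1 else 0 :=
    fun S hS => sum_powerset_filter_ne_empty_ne_neg_one_pow_card inter_subset_right
      (by rwa [card_powersetCard, mem_ksubsets.mp hS])
  rw [sum_assignmentSign_filter_gEdges_subset, prod_congr rfl hfactor, prod_ite_zero, prod_const,
    card_ksubsets]
  rfl

theorem sum_assignmentSign_mul_two_pow (n k : ℕ) :
    ∑ g ∈ RamseyA n k, assignmentSign n k g * 2 ^ (n.choose 2 - #(gEdges n k g)) =
      ∑ E ∈ (powersetCard 2 (univ : Finset (Fin n))).powerset,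
        ∑ g ∈ RamseyA n k with gEdges n k g ⊆ E, assignmentSign n k g := by
  rw [sum_comm' (t' := RamseyA n k) (s' := fun g => Icc (gEdges n k g) (powersetCard 2 univ))]
  · refine sum_congr rfl fun g hg => ?_
    rw [sum_const, card_Icc_finset (gEdges_subset_powersetCard hg), card_powersetCard, card_univ,
      Fintype.card_fin, nsmul_eq_mul, mul_comm]
    push_cast
    rfl
  · intro E g
    simp only [mem_powerset, mem_filter, mem_Icc]
    tauto

theorem two_pow_mul_aeval_Pnk (n k : ℕ) :
    (2 : ℝ) ^ n.choose 2 * Polynomial.aeval (1 / 2 : ℝ) (Pnk n k) =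
      ((∑ g ∈ RamseyA n k, assignmentSign n k g * 2 ^ (n.choose 2 - #(gEdges n k g)) : ℤ) : ℝ) := by
  rw [Pnk, map_sum, mul_sum]
  push_cast
  refine sum_congr rfl fun g hg => ?_
  have hcard : #(gEdges n k g) ≤ n.choose 2 := by
    simpa using card_le_card (gEdges_subset_powersetCard hg)
  rw [map_mul, map_pow, Polynomial.aeval_C, Polynomial.aeval_X, pow_sub₀ _ two_ne_zero hcard,
    assignmentSign]
  simp only [algebraMap_int_eq, eq_intCast, Int.cast_prod, Int.cast_pow, Int.cast_neg, Int.cast_one,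
    one_div, inv_pow]
  ring

theorem isRamseyGraph_iff {n k : ℕ} (G : SimpleGraph (Fin n)) [DecidableRel G.Adj] :
    IsRamseyGraph k G ↔ IsRamseyEdgeSet n k (G.cliqueFinset 2) := by
  simp only [IsRamseyGraph, IsRamseyEdgeSet, SimpleGraph.isNClique_iff, SimpleGraph.isClique_compl,
    SimpleGraph.isClique_iff_powersetCard_two_subset,
    SimpleGraph.isIndepSet_iff_disjoint_powersetCard_two, mem_ksubsets, ne_eq,
    ← disjoint_iff_inter_eq_empty, inter_eq_right, not_exists, not_and]
  exact ⟨fun h S hS => ⟨fun hd => h.2 S hd hS, fun hc => h.1 S hc hS⟩,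
    fun h => ⟨fun S hc hS => (h S hS).2 hc, fun S hd hS => (h S hS).1 hd⟩⟩

open Classical in
theorem card_isRamseyGraph (n k : ℕ) :
    Nat.card {G : SimpleGraph (Fin n) // IsRamseyGraph k G} =
      #{E ∈ (powersetCard 2 (univ : Finset (Fin n))).powerset | IsRamseyEdgeSet n k E} := by
  rw [Nat.card_eq_fintype_card, Fintype.card_subtype, ← SimpleGraph.card_filter_cliqueFinset_two]
  simp only [isRamseyGraph_iff]

theorem sum_assignmentSign_mul_two_pow_eq {n k : ℕ} (hk : Odd (k.choose 2)) :
    ∑ g ∈ RamseyA n k, assignmentSign n k g * 2 ^ (n.choose 2 - #(gEdges n k g)) =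
      (-1) ^ n.choose k * Nat.card {G : SimpleGraph (Fin n) // IsRamseyGraph k G} := by
  rw [sum_assignmentSign_mul_two_pow,
    sum_congr rfl fun E _ => sum_assignmentSign_filter_gEdges_subset_eq_ite hk E, sum_ite,
    sum_const_zero, add_zero, sum_const, card_isRamseyGraph, nsmul_eq_mul, mul_comm]

theorem stmt_7_general (n k : ℕ) (hkmod : k % 4 = 2 ∨ k % 4 = 3) :
    (Nat.card {G : SimpleGraph (Fin n) // IsRamseyGraph k G} : ℝ) / 2 ^ (n.choose 2) =
        (-1 : ℝ) ^ (n.choose k) * Polynomial.aeval ((1 : ℝ) / 2) (Pnk n k) ∧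
      (Nat.card {G : SimpleGraph (Fin n) // IsRamseyGraph k G} : ℝ) =
        (-1 : ℝ) ^ (n.choose k) * 2 ^ (n.choose 2) *
          Polynomial.aeval ((1 : ℝ) / 2) (Pnk n k) := by
  have hcount : (Nat.card {G : SimpleGraph (Fin n) // IsRamseyGraph k G} : ℝ) =
      (-1 : ℝ) ^ (n.choose k) * 2 ^ (n.choose 2) * Polynomial.aeval ((1 : ℝ) / 2) (Pnk n k) := by
    rw [mul_assoc, two_pow_mul_aeval_Pnk, sum_assignmentSign_mul_two_pow_eq
      (odd_choose_two_of_mod_four hkmod)]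
    push_cast
    rw [← mul_assoc, ← pow_add, Even.neg_one_pow ⟨_, rfl⟩, one_mul]
  refine ⟨?_, hcount⟩
  rw [hcount]
  field_simp

theorem stmt_7 (n k : ℕ) (hk : 2 ≤ k) (hkn : k ≤ n)
    (hkmod : k % 4 = 2 ∨ k % 4 = 3) :
    (Nat.card {G : SimpleGraph (Fin n) // IsRamseyGraph k G} : ℝ) / 2 ^ (n.choose 2) =
        (-1 : ℝ) ^ (n.choose k) * Polynomial.aeval ((1 : ℝ) / 2) (Pnk n k) ∧
      (Nat.card {G : SimpleGraph (Fin n) // IsRamseyGraph k G} : ℝ) =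
        (-1 : ℝ) ^ (n.choose k) * 2 ^ (n.choose 2) *
          Polynomial.aeval ((1 : ℝ) / 2) (Pnk n k) :=
  stmt_7_general n k hkmod
end
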